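/- arXiv:1410.2020 — 2 statements merged into one kernel-verified Lean document; each statement's English description precedes it below -/
import Mathlib

section
/- Let a > 0 and let e : (a,∞) → M₂(ℂ) be differentiable with columns e₁, e₂ satisfying B·e_j′(x) + (μ/x)·J·e_j(x) = e_j(x) for all real x > a and j = 1,2. Suppose that e^{−R_j x}·e_j(x) → z_j⁰ as x → +∞ along the reals, where R₁ = i, R₂ = −i, z₁⁰ = (i,1)ᵀ, z₂⁰ = (−i,1)ᵀ. Then det e(x) = 2i for every x > a. -/
open Complex Matrix Set Filter

noncomputable def Bmat : Matrix (Fin 2) (Fin 2) ℂ := !![0, 1; -1, 0]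
noncomputable def Jmat : Matrix (Fin 2) (Fin 2) ℂ := !![0, 1; 1, 0]

/-- `R₁ = i` (index 0), `R₂ = -i` (index 1). -/
noncomputable def Rcoef : Fin 2 → ℂ := ![Complex.I, -Complex.I]

/-- `z₁⁰ = (i,1)ᵀ` (index 0), `z₂⁰ = (-i,1)ᵀ` (index 1). -/
noncomputable def z0vec : Fin 2 → Fin 2 → ℂ :=
  ![![Complex.I, 1], ![-Complex.I, 1]]

/-!
The Wronskian `det e` of two solutions is constant, since solving for `Y′` puts the system in the
form `Y′ = A(x) Y` with a traceless `A(x)` (Liouville's formula). Since `Rcoef` sums to zero,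
`det e(x)` also equals the determinant of the rescaled columns `e^{−R_j x} e_j(x)`, which tends to
`det (z₁⁰ z₂⁰) = 2i`.
-/

/-- The coefficient matrix of the Dirac system `B Y′ + c J Y = Y` written as `Y′ = A Y`. -/
def diracCoeff (c : ℂ) : Matrix (Fin 2) (Fin 2) ℂ := !![c, -1; 1, -c]

theorem trace_diracCoeff (c : ℂ) : (diracCoeff c).trace = 0 := by
  simp [diracCoeff, trace_fin_two]

theorem Bmat_mul_self : Bmat * Bmat = -1 := by
  ext i j
  fin_cases i <;> fin_cases j <;> simp [Bmat, mul_apply, Fin.sum_univ_two]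

theorem eq_diracCoeff_mulVec_of_dirac {c : ℂ} {v v' : Fin 2 → ℂ}
    (h : Bmat *ᵥ v' + c • Jmat *ᵥ v = v) : v' = diracCoeff c *ᵥ v := by
  have hBv' : Bmat *ᵥ v' = (1 - c • Jmat) *ᵥ v := by
    rw [sub_mulVec, one_mulVec, smul_mulVec, eq_sub_iff_add_eq, h]
  have hcoeff : -Bmat * (1 - c • Jmat) = diracCoeff c := by
    ext i j
    fin_cases i <;> fin_cases j <;>
      simp [Bmat, Jmat, diracCoeff, mul_apply, Fin.sum_univ_two, one_apply]
  calc v' = -(Bmat * Bmat) *ᵥ v' := by rw [Bmat_mul_self, neg_neg, one_mulVec]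
    _ = -Bmat *ᵥ (Bmat *ᵥ v') := by rw [← neg_mul, mulVec_mulVec]
    _ = diracCoeff c *ᵥ v := by rw [hBv', mulVec_mulVec, hcoeff]

theorem hasDerivAt_det_fin_two {e : ℝ → Matrix (Fin 2) (Fin 2) ℂ}
    {A : Matrix (Fin 2) (Fin 2) ℂ} {x : ℝ}
    (he : ∀ i j, HasDerivAt (fun y => e y i j) ((A * e x) i j) x) :
    HasDerivAt (fun y => (e y).det) (A.trace * (e x).det) x := by
  simp only [det_fin_two]
  refine (((he 0 0).mul (he 1 1)).sub ((he 0 1).mul (he 1 0))).congr_deriv ?_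
  simp only [mul_apply, Fin.sum_univ_two, trace_fin_two]
  ring

theorem eq_of_hasDerivAt_zero_of_tendsto {E : Type*} [NormedAddCommGroup E] [NormedSpace ℝ E]
    {f : ℝ → E} {a : ℝ} {L : E} (hf : ∀ x ∈ Ioi a, HasDerivAt f 0 x)
    (hlim : Tendsto f atTop (nhds L)) : ∀ x ∈ Ioi a, f x = L := by
  intro x hx
  have hconst : ∀ y ∈ Ioi a, f x = f y := fun y hy =>
    isOpen_Ioi.is_const_of_deriv_eq_zero isPreconnected_Ioi
      (fun z hz => (hf z hz).differentiableAt.differentiableWithinAt)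
      (fun z hz => (hf z hz).deriv) hx hy
  refine tendsto_nhds_unique (tendsto_const_nhds.congr' ?_) hlim
  filter_upwards [eventually_gt_atTop a] with y hy using hconst y hy

theorem det_eq_det_rescaled (M : Matrix (Fin 2) (Fin 2) ℂ) (x : ℝ) :
    M.det = (of fun j i => exp (-Rcoef j * x) * M i j).det := by
  have hexp : exp (-I * x) * exp (-(-I) * x) = 1 := by
    rw [← Complex.exp_add]
    ring_nf
    exact Complex.exp_zero
  simp only [det_fin_two, of_apply, Rcoef, cons_val_zero, cons_val_one]
  linear_combination -(M 0 0 * M 1 1 - M 0 1 * M 1 0) * hexp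

theorem det_z0vec : (of z0vec).det = 2 * I := by
  rw [z0vec, det_fin_two_of]
  ring

theorem stmt4_general (μ : ℂ) (a : ℝ)
    (e : ℝ → Matrix (Fin 2) (Fin 2) ℂ)
    -- each column is differentiable and solves the singular Dirac system on (a,∞)
    (hdiff : ∀ j : Fin 2, ∀ x ∈ Set.Ioi a,
      DifferentiableAt ℝ (fun y => (fun i => e y i j)) x ∧
      Bmat.mulVec (deriv (fun y => (fun i => e y i j)) x) +
        (μ / (x : ℂ)) • Jmat.mulVec (fun i => e x i j) = (fun i => e x i j))
    -- asymptotics at +∞: e^{-R_j x} e_j(x) → z_j⁰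
    (hasymp : ∀ j : Fin 2,
      Tendsto (fun x : ℝ => fun i => Complex.exp (-(Rcoef j) * x) * e x i j)
        atTop (nhds (z0vec j))) :
    ∀ x ∈ Set.Ioi a, (e x).det = 2 * Complex.I := by
  have hderiv : ∀ x ∈ Ioi a, HasDerivAt (fun y => (e y).det) 0 x := by
    intro x hx
    have hentry : ∀ i j, HasDerivAt (fun y => e y i j) ((diracCoeff (μ / x) * e x) i j) x := by
      intro i j
      obtain ⟨hd, hsys⟩ := hdiff j x hx
      have hcol := hasDerivAt_pi.1 hd.hasDerivAt i
      rwa [eq_diracCoeff_mulVec_of_dirac hsys] at hcol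
    simpa [trace_diracCoeff] using hasDerivAt_det_fin_two hentry
  refine eq_of_hasDerivAt_zero_of_tendsto hderiv ?_
  have hrescaled : Tendsto (fun x : ℝ => of fun j i => exp (-Rcoef j * x) * e x i j)
      atTop (nhds (of z0vec)) := tendsto_pi_nhds.2 hasymp
  simpa only [Function.comp_def, id, ← det_eq_det_rescaled, det_z0vec] using
    (continuous_id.matrix_det.tendsto _).comp hrescaled

theorem stmt4 (μ : ℂ) (hμ : 0 < μ.re) (a : ℝ) (ha : 0 < a)
    (e : ℝ → Matrix (Fin 2) (Fin 2) ℂ)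
    -- each column is differentiable and solves the singular Dirac system on (a,∞)
    (hdiff : ∀ j : Fin 2, ∀ x ∈ Set.Ioi a,
      DifferentiableAt ℝ (fun y => (fun i => e y i j)) x ∧
      Bmat.mulVec (deriv (fun y => (fun i => e y i j)) x) +
        (μ / (x : ℂ)) • Jmat.mulVec (fun i => e x i j) = (fun i => e x i j))
    -- asymptotics at +∞: e^{-R_j x} e_j(x) → z_j⁰
    (hasymp : ∀ j : Fin 2,
      Tendsto (fun x : ℝ => fun i => Complex.exp (-(Rcoef j) * x) * e x i j)
        atTop (nhds (z0vec j))) :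
    ∀ x ∈ Set.Ioi a, (e x).det = 2 * Complex.I :=
  stmt4_general μ a e hdiff hasymp
end

section
/- Let q₁, q₂ be differentiable at t > 0 and suppose μ²/s² − λ² ≠ 0 for all s in a neighborhood of t, so that Q(s,λ) = (μ/s)·J − λ·I is invertible there (and (d/ds)(Q(s,λ)^{−1}) = Q(s,λ)^{−2}·(μ/s²)·J). Then L(t,λ) := (d/dt)(Q(t,λ)^{−1}·Q(t)) + Q(t,λ)^{−1}·(Q(t)·B·Q(t) + Q(t)·B·Q(t,λ) + Q(t,λ)·B·Q(t)) equals Q(t,λ)^{−1}·(Q′(t) − (q₁(t)² + q₂(t)²)·B) + Q(t,λ)^{−1}·(μ/t)·( Q(t,λ)^{−1}·(1/t)·J·Q(t) − 2·q₂(t)·B ). -/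
open Complex Matrix Filter

attribute [local instance] Matrix.linftyOpNormedRing Matrix.linftyOpNormedAlgebra

noncomputable def Kmat : Matrix (Fin 2) (Fin 2) ℂ := !![1, 0; 0, -1]

/-- `Q(t) = q₁(t) K + q₂(t) J`. -/
noncomputable def Qm (q₁ q₂ : ℝ → ℂ) (t : ℝ) : Matrix (Fin 2) (Fin 2) ℂ :=
  q₁ t • Kmat + q₂ t • Jmat

/-- `Q(t,λ) = (μ/t) J − λ I`. -/
noncomputable def Qlam (μ : ℂ) (t : ℝ) (lam : ℂ) : Matrix (Fin 2) (Fin 2) ℂ :=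
  (μ / (t : ℂ)) • Jmat - lam • (1 : Matrix (Fin 2) (Fin 2) ℂ)

/-!
Writing `P = Q(t,λ)⁻¹`, the product rule and `(Q(·,λ)⁻¹)′ = -P Q(·,λ)′ P` with
`Q(·,λ)′ = -(μ/t²) J` give `(μ/t²) P J P Q + P Q′` for the derivative. As `Q(t,λ)` is a
combination of `J` and `I`, `J` commutes with it and hence with `P`, so `P J P = P² J`.
The quadratic term `QBQ + QBQ(t,λ) + Q(t,λ)BQ` collapses to `(-(q₁² + q₂²) - 2(μ/t) q₂) B`
by the multiplication table of `B, J, K`; the rest is linear rearrangement.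
-/

open scoped Ring

theorem Commute.ringInverse_right {M₀ : Type*} [MonoidWithZero M₀] {a b : M₀}
    (h : Commute a b) : Commute a b⁻¹ʳ := by
  by_cases hb : IsUnit b
  · obtain ⟨u, rfl⟩ := hb
    rw [Ring.inverse_unit]
    exact h.units_inv_right
  · rw [Ring.inverse_non_unit b hb]
    exact Commute.zero_right a

theorem HasDerivAt.ringInverse {𝕜 R : Type*} [NontriviallyNormedField 𝕜] [NormedRing R]
    [HasSummableGeomSeries R] [NormedAlgebra 𝕜 R] {f : 𝕜 → R} {f' : R} {x : 𝕜}
    (hf : HasDerivAt f f' x) (hx : IsUnit (f x)) :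
    HasDerivAt (fun y => (f y)⁻¹ʳ) (-((f x)⁻¹ʳ * f' * (f x)⁻¹ʳ)) x := by
  obtain ⟨u, hu⟩ := hx
  have hinv := hasFDerivAt_ringInverse (𝕜 := 𝕜) u
  rw [hu, ← Ring.inverse_unit u, hu] at hinv
  exact (hinv.comp_hasDerivAt x hf).congr_deriv (by simp)

theorem det_Qlam (μ : ℂ) (t : ℝ) (lam : ℂ) :
    (Qlam μ t lam).det = lam ^ 2 - μ ^ 2 / (t : ℂ) ^ 2 := by
  simp [Qlam, Jmat, Matrix.det_fin_two]
  ring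

theorem isUnit_Qlam {μ : ℂ} {t : ℝ} {lam : ℂ} (h : μ ^ 2 / (t : ℂ) ^ 2 - lam ^ 2 ≠ 0) :
    IsUnit (Qlam μ t lam) := by
  rw [Matrix.isUnit_iff_isUnit_det, det_Qlam, isUnit_iff_ne_zero]
  exact fun h' => h (by linear_combination -h')

theorem commute_Jmat_Qlam (μ : ℂ) (t : ℝ) (lam : ℂ) : Commute Jmat (Qlam μ t lam) :=
  ((Commute.refl Jmat).smul_right _).sub_right ((Commute.one_right Jmat).smul_right _)

theorem hasDerivAt_Qlam (μ lam : ℂ) {t : ℝ} (ht : t ≠ 0) :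
    HasDerivAt (fun s : ℝ => Qlam μ s lam) (-(μ / (t : ℂ) ^ 2) • Jmat) t := by
  have hdiv : HasDerivAt (fun s : ℝ => μ / (s : ℂ)) (-(μ / (t : ℂ) ^ 2)) t := by
    simpa [div_eq_mul_inv, mul_comm] using
      ((hasDerivAt_inv (by exact_mod_cast ht : (t : ℂ) ≠ 0)).const_mul μ).comp_ofReal
  exact (hdiv.smul_const Jmat).sub_const _

theorem hasDerivAt_Qm {q₁ q₂ : ℝ → ℂ} {t : ℝ} (hq₁ : DifferentiableAt ℝ q₁ t)
    (hq₂ : DifferentiableAt ℝ q₂ t) :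
    HasDerivAt (Qm q₁ q₂) (deriv q₁ t • Kmat + deriv q₂ t • Jmat) t :=
  (hq₁.hasDerivAt.smul_const Kmat).add (hq₂.hasDerivAt.smul_const Jmat)

/- `B` anticommutes with `K` and `J`, while `KBK = JBJ = -B` and `KBJ = -JBK = 1`. -/
theorem Qm_mul_Bmat_mul_Qm_add (q₁ q₂ : ℝ → ℂ) (μ : ℂ) (t : ℝ) (lam : ℂ) :
    Qm q₁ q₂ t * Bmat * Qm q₁ q₂ t + Qm q₁ q₂ t * Bmat * Qlam μ t lam +
        Qlam μ t lam * Bmat * Qm q₁ q₂ t =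
      (-(q₁ t ^ 2 + q₂ t ^ 2) - μ / (t : ℂ) * (2 * q₂ t)) • Bmat := by
  ext i j
  fin_cases i <;> fin_cases j <;>
    simp [Qm, Qlam, Bmat, Jmat, Kmat, Matrix.one_fin_two] <;> ring

theorem stmt17 (μ lam : ℂ) (q₁ q₂ : ℝ → ℂ) (t : ℝ) (ht : 0 < t)
    (hq₁ : DifferentiableAt ℝ q₁ t) (hq₂ : DifferentiableAt ℝ q₂ t)
    (hreg : ∀ᶠ s in nhds t, μ ^ 2 / (s : ℂ) ^ 2 - lam ^ 2 ≠ 0) :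
    deriv (fun s : ℝ => (Qlam μ s lam)⁻¹ * Qm q₁ q₂ s) t +
      (Qlam μ t lam)⁻¹ *
        (Qm q₁ q₂ t * Bmat * Qm q₁ q₂ t + Qm q₁ q₂ t * Bmat * Qlam μ t lam +
          Qlam μ t lam * Bmat * Qm q₁ q₂ t) =
    (Qlam μ t lam)⁻¹ *
        ((deriv q₁ t • Kmat + deriv q₂ t • Jmat) -
          (q₁ t ^ 2 + q₂ t ^ 2) • Bmat) +
      (μ / (t : ℂ)) • ((Qlam μ t lam)⁻¹ *
        ((1 / (t : ℂ)) • ((Qlam μ t lam)⁻¹ * Jmat * Qm q₁ q₂ t) -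
          (2 * q₂ t) • Bmat)) := by
  simp only [Matrix.nonsing_inv_eq_ringInverse]
  have hQlam := (hasDerivAt_Qlam μ lam ht.ne').ringInverse (isUnit_Qlam hreg.self_of_nhds)
  -- stated against the goal's `deriv`, whose matrix instances match the lemma's only up to defeq
  have hderiv : deriv (fun s : ℝ => (Qlam μ s lam)⁻¹ʳ * Qm q₁ q₂ s) t = _ :=
    (hQlam.fun_mul (hasDerivAt_Qm hq₁ hq₂)).deriv
  rw [hderiv, mul_add, Qm_mul_Bmat_mul_Qm_add]
  set P := (Qlam μ t lam)⁻¹ʳ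
  have hPJ : P * Jmat * P = P * P * Jmat := by
    rw [mul_assoc, (commute_Jmat_Qlam μ t lam).ringInverse_right.eq, mul_assoc]
  simp only [mul_add, mul_sub, Matrix.mul_smul, Matrix.smul_mul, neg_mul, hPJ, ← mul_assoc]
  module
end
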